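/- Let λ ∈ [0,1], x, y ∈ ℝ³, x_λ = λx + (1-λ)y, and let x(·), y(·), x_λ(·) be trajectories of the Heisenberg dynamics driven by the same control α, starting at x, y, x_λ. Then x₃(s) - x_{λ,3}(s) = (1-λ)[x₃ - y₃ - (x₂-y₂)∫_t^s α₁ dτ + (x₁-y₁)∫_t^s α₂ dτ] and y₃(s) - x_{λ,3}(s) = λ[y₃ - x₃ + (x₂-y₂)∫_t^s α₁ dτ - (x₁-y₁)∫_t^s α₂ dτ]; in particular λ(x(s) - x_λ(s)) + (1-λ)(y(s) - x_λ(s)) = 0 for all s. -/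
import Mathlib


open MeasureTheory intervalIntegral Set

/-- Integral form of the Heisenberg dynamics x₁'=α₁, x₂'=α₂, x₃'=-x₂α₁+x₁α₂
on `[t,T]` starting at `x0`. -/
def IsTrajH (t T : ℝ) (x0 : Fin 3 → ℝ) (α1 α2 : ℝ → ℝ) (X : ℝ → Fin 3 → ℝ) : Prop :=
  (∀ s ∈ Icc t T, X s 0 = x0 0 + ∫ τ in t..s, α1 τ) ∧
  (∀ s ∈ Icc t T, X s 1 = x0 1 + ∫ τ in t..s, α2 τ) ∧
  (∀ s ∈ Icc t T, X s 2 = x0 2 + ∫ τ in t..s, (-(X τ 1) * α1 τ + X τ 0 * α2 τ))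

/-- Convex-combination identities for three Heisenberg trajectories with the same
control starting from x, y and x_λ = λx + (1-λ)y. -/
theorem convex_combination_trajectories (t T : ℝ) (ht : t ≤ T) (l : ℝ)
    (hl : l ∈ Icc (0:ℝ) 1) (x0 y0 : Fin 3 → ℝ)
    (α1 α2 : ℝ → ℝ) (x y xl : ℝ → Fin 3 → ℝ)
    (hα1 : IntervalIntegrable α1 volume t T)
    (hα2 : IntervalIntegrable α2 volume t T)
    (hx3 : IntervalIntegrable (fun τ => -(x τ 1) * α1 τ + x τ 0 * α2 τ) volume t T)
    (hy3 : IntervalIntegrable (fun τ => -(y τ 1) * α1 τ + y τ 0 * α2 τ) volume t T)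
    (hxl3 : IntervalIntegrable (fun τ => -(xl τ 1) * α1 τ + xl τ 0 * α2 τ) volume t T)
    (hx : IsTrajH t T x0 α1 α2 x) (hy : IsTrajH t T y0 α1 α2 y)
    (hxl : IsTrajH t T (fun i => l * x0 i + (1 - l) * y0 i) α1 α2 xl) :
    ∀ s ∈ Icc t T,
      (x s 2 - xl s 2 = (1 - l) * (x0 2 - y0 2
          - (x0 1 - y0 1) * (∫ τ in t..s, α1 τ)
          + (x0 0 - y0 0) * (∫ τ in t..s, α2 τ))) ∧
      (y s 2 - xl s 2 = l * (y0 2 - x0 2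
          + (x0 1 - y0 1) * (∫ τ in t..s, α1 τ)
          - (x0 0 - y0 0) * (∫ τ in t..s, α2 τ))) ∧
      (∀ i : Fin 3, l * (x s i - xl s i) + (1 - l) * (y s i - xl s i) = 0) := by
  obtain ⟨hx1, hx2, hx3'⟩ := hx
  obtain ⟨hy1, hy2, hy3'⟩ := hy
  obtain ⟨hl1, hl2, hl3'⟩ := hxl
  intro s hs
  have hts : t ≤ s := hs.1
  have hsub : Set.uIcc t s ⊆ Set.uIcc t T := by
    rw [uIcc_of_le hts, uIcc_of_le ht]
    exact Icc_subset_Icc le_rfl hs.2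
  have hIcc : Set.uIcc t s ⊆ Icc t T := by
    rw [uIcc_of_le hts]; exact Icc_subset_Icc le_rfl hs.2
  set A := ∫ τ in t..s, α1 τ with hA
  set B := ∫ τ in t..s, α2 τ with hB
  have hα1s := hα1.mono_set hsub
  have hα2s := hα2.mono_set hsub
  have hint : ∀ c d : ℝ, (∫ τ in t..s, (c * α1 τ + d * α2 τ)) = c * A + d * B := by
    intro c d
    rw [intervalIntegral.integral_add (hα1s.const_mul c) (hα2s.const_mul d),
        intervalIntegral.integral_const_mul, intervalIntegral.integral_const_mul]
  have e1 : x s 2 - xl s 2 = (1 - l) * (x0 2 - y0 2 - (x0 1 - y0 1) * A + (x0 0 - y0 0) * B) := by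
    have key : (∫ τ in t..s, (-(x τ 1) * α1 τ + x τ 0 * α2 τ))
         - (∫ τ in t..s, (-(xl τ 1) * α1 τ + xl τ 0 * α2 τ))
         = (-(1 - l) * (x0 1 - y0 1)) * A + ((1 - l) * (x0 0 - y0 0)) * B := by
      rw [← intervalIntegral.integral_sub (hx3.mono_set hsub) (hxl3.mono_set hsub),
          ← hint (-(1 - l) * (x0 1 - y0 1)) ((1 - l) * (x0 0 - y0 0))]
      refine intervalIntegral.integral_congr fun τ hτ => ?_
      have hτ' := hIcc hτ
      simp only [hx1 τ hτ', hx2 τ hτ', hl1 τ hτ', hl2 τ hτ']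
      ring
    rw [hx3' s hs, hl3' s hs]
    simp only
    linear_combination key
  have e2 : y s 2 - xl s 2 = l * (y0 2 - x0 2 + (x0 1 - y0 1) * A - (x0 0 - y0 0) * B) := by
    have key : (∫ τ in t..s, (-(y τ 1) * α1 τ + y τ 0 * α2 τ))
         - (∫ τ in t..s, (-(xl τ 1) * α1 τ + xl τ 0 * α2 τ))
         = (l * (x0 1 - y0 1)) * A + (-(l * (x0 0 - y0 0))) * B := by
      rw [← intervalIntegral.integral_sub (hy3.mono_set hsub) (hxl3.mono_set hsub),
          ← hint (l * (x0 1 - y0 1)) (-(l * (x0 0 - y0 0)))]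
      refine intervalIntegral.integral_congr fun τ hτ => ?_
      have hτ' := hIcc hτ
      simp only [hy1 τ hτ', hy2 τ hτ', hl1 τ hτ', hl2 τ hτ']
      ring
    rw [hy3' s hs, hl3' s hs]
    simp only
    linear_combination key
  refine ⟨e1, e2, ?_⟩
  intro i
  fin_cases i
  · show l * (x s 0 - xl s 0) + (1 - l) * (y s 0 - xl s 0) = 0
    rw [hx1 s hs, hy1 s hs, hl1 s hs]; ring
  · show l * (x s 1 - xl s 1) + (1 - l) * (y s 1 - xl s 1) = 0
    rw [hx2 s hs, hy2 s hs, hl2 s hs]; ring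
  · show l * (x s 2 - xl s 2) + (1 - l) * (y s 2 - xl s 2) = 0
    linear_combination l * e1 + (1 - l) * e2
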